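/- arXiv:2412.10326 — 3 statements merged into one kernel-verified Lean document; each statement's English description precedes it below -/
import Mathlib

section
/- For integers r ≥ 5 and 0 ≤ k ≤ (r-2)/3, let M be a simple binary matroid of rank r with no coloops that has a k-loose element. Then |E(M)| ≤ 2^k · (r - k + 1). -/
namespace Matroid

variable {α : Type*}

/-- A circuit of a matroid is a minimal dependent set. -/
def Circuit (M : Matroid α) (C : Set α) : Prop :=
  M.Dep C ∧ ∀ D, D ⊂ C → M.Indep D

/-- A coloop is an element belonging to every basis. -/
def Coloop (M : Matroid α) (e : α) : Prop :=
  e ∈ M.E ∧ ∀ B, M.IsBase B → e ∈ B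

/-- A matroid is simple if every subset of the ground set with at most two
elements is independent. -/
def Simple (M : Matroid α) : Prop :=
  ∀ e ∈ M.E, ∀ f ∈ M.E, M.Indep {e, f}

/-- The rank of a matroid: the supremum of the cardinalities of its bases. -/
noncomputable def rk (M : Matroid α) : ℕ :=
  sSup {n | ∃ B, M.IsBase B ∧ B.ncard = n}

/-- A matroid is representable over a field `F` if independence in `M` coincides
with linear independence under some assignment of vectors to ground set elements. -/
def RepresentableOver (M : Matroid α) (F : Type) [Field F] : Prop :=
  ∃ (n : ℕ) (φ : α → (Fin n → F)),
    ∀ I, I ⊆ M.E → (M.Indep I ↔ LinearIndependent F (fun x : I => φ x))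

/-- An element `e` is `k`-loose if every circuit containing `e` has size
greater than `r - k`, where `r` is the rank of the matroid. -/
def KLoose (M : Matroid α) (k : ℕ) (e : α) : Prop :=
  e ∈ M.E ∧ ∀ C, M.Circuit C → e ∈ C → M.rk - k < C.ncard

/-- A matroid is `k`-paving if every element is `k`-loose. -/
def KPaving (M : Matroid α) (k : ℕ) : Prop :=
  ∀ e ∈ M.E, M.KLoose k e

end Matroid

open Finset in
lemma cardSymmDiff {β : Type*} [DecidableEq β] (A B : Finset β) :
    (symmDiff A B).card + 2 * (A ∩ B).card = A.card + B.card := by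
  have h1 : symmDiff A B = (A ∪ B) \ (A ∩ B) := by rw [symmDiff_eq_sup_sdiff_inf]; rfl
  have h2 : (A ∩ B) ⊆ (A ∪ B) := (Finset.inter_subset_left).trans Finset.subset_union_left
  rw [h1]
  have h3 := Finset.card_sdiff_of_subset h2
  have h4 := Finset.card_union_add_card_inter A B
  have h5 : (A ∩ B).card ≤ (A ∪ B).card := Finset.card_le_card h2
  omega

-- arithmetic final lemma
lemma nat_final (r k m : ℕ) (h1 : r - k ≤ m) (h2 : m ≤ r) (h3 : k ≤ r) :
    2 ^ (r - m) * (m + 1) ≤ 2 ^ k * (r - k + 1) := by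
  set d := m - (r - k) with hd
  have hm : m = r - k + d := by omega
  have hrm : r - m = k - d := by omega
  have hdk : d ≤ k := by omega
  have h2d : d + 1 ≤ 2 ^ d := by have := Nat.lt_two_pow_self (n := d); omega
  calc 2 ^ (r - m) * (m + 1) = 2 ^ (k - d) * (r - k + d + 1) := by rw [hrm, hm]
    _ ≤ 2 ^ (k - d) * ((d + 1) * (r - k + 1)) := by
        apply Nat.mul_le_mul_left
        have : (d+1) * (r - k + 1) = d * (r-k+1) + (r - k + 1) := by ring
        nlinarith
    _ ≤ 2 ^ (k - d) * (2 ^ d * (r - k + 1)) := by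
        apply Nat.mul_le_mul_left
        exact Nat.mul_le_mul_right _ h2d
    _ = 2 ^ k * (r - k + 1) := by rw [← mul_assoc, ← pow_add]; congr 2; omega

section diam2
variable {β : Type*} [DecidableEq β]

lemma card_le_four {γ : Type*} [DecidableEq γ] (s1 s2 s3 s4 : γ) :
    ({s1, s2, s3, s4} : Finset γ).card ≤ 4 := by
  refine (Finset.card_insert_le _ _).trans (Nat.succ_le_succ ?_)
  refine (Finset.card_insert_le _ _).trans (Nat.succ_le_succ ?_)
  refine (Finset.card_insert_le _ _).trans (Nat.succ_le_succ ?_)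
  simp

lemma two_mem (A : Finset β) (g : β) (hA : A.card = 2) (hg : g ∈ A) :
    ∃ z, z ≠ g ∧ A = {g, z} := by
  have h1 : (A.erase g).card = 1 := by rw [Finset.card_erase_of_mem hg, hA]
  obtain ⟨z, hz⟩ := Finset.card_eq_one.mp h1
  have hzg : z ≠ g := by
    have : z ∈ A.erase g := hz ▸ Finset.mem_singleton_self z
    exact (Finset.mem_erase.mp this).1
  refine ⟨z, hzg, ?_⟩
  rw [← Finset.insert_erase hg, hz]

variable {T : Finset β} {F : Finset (Finset β)}

lemma diam2_sing (hd : ∀ A ∈ F, ∀ B ∈ F, (symmDiff A B).card ≤ 2)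
    {x : β} {A : Finset β} (hx : {x} ∈ F) (hA : A ∈ F) (hA2 : A.card = 2) : x ∈ A := by
  by_contra hxA
  have hint : ({x} : Finset β) ∩ A = ∅ := Finset.singleton_inter_of_notMem hxA
  have := cardSymmDiff ({x} : Finset β) A
  rw [hint] at this
  have hd' := hd _ hx _ hA
  simp [hA2] at this
  omega

lemma diam2_two (hd : ∀ A ∈ F, ∀ B ∈ F, (symmDiff A B).card ≤ 2)
    {A B : Finset β} (hA : A ∈ F) (hB : B ∈ F) (hA2 : A.card = 2) (hB2 : B.card = 2)
    (hAB : A ≠ B) : (A ∩ B).card = 1 := by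
  have hcs := cardSymmDiff A B
  have hd' := hd _ hA _ hB
  have hle : (A ∩ B).card ≤ 2 := le_trans (Finset.card_le_card Finset.inter_subset_left) hA2.le
  rcases Nat.lt_or_ge (A ∩ B).card 2 with h | h
  · omega
  · exfalso
    have h2 : (A ∩ B).card = 2 := le_antisymm hle h
    have : A ∩ B = A := Finset.eq_of_subset_of_card_le Finset.inter_subset_left (by omega)
    have hsub : A ⊆ B := by rw [← this]; exact Finset.inter_subset_right
    exact hAB (Finset.eq_of_subset_of_card_le hsub (by omega))

lemma diam2_common (hT : 3 ≤ T.card) (hsub : ∀ A ∈ F, A ⊆ T) (h0 : ∅ ∈ F)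
    (hd : ∀ A ∈ F, ∀ B ∈ F, (symmDiff A B).card ≤ 2)
    (hcard : ∀ A ∈ F, A.card ≤ 2)
    (g : β) (hgT : g ∈ T) (hP : ∃ P ∈ F, P.card = 2)
    (hcom : ∀ A ∈ F, A.card = 2 → g ∈ A) :
    F.card ≤ T.card + 1 := by
  obtain ⟨P, hPF, hP2⟩ := hP
  obtain ⟨w, hwg, hPw⟩ := two_mem P g hP2 (hcom P hPF hP2)
  by_cases hsx : ∃ x, {x} ∈ F ∧ x ≠ g
  · obtain ⟨x, hxF, hxg⟩ := hsx
    have hxw : x = w := by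
      have hxP : x ∈ P := diam2_sing hd hxF hPF hP2
      rw [hPw] at hxP
      rcases Finset.mem_insert.mp hxP with h' | h'
      · exact absurd h' hxg
      · exact Finset.mem_singleton.mp h'
    have hFsub : F ⊆ {∅, {g}, {x}, {g, x}} := by
      intro A hA
      have hAc := hcard A hA
      interval_cases h : A.card
      · simp [Finset.card_eq_zero.mp h]
      · obtain ⟨y, hy⟩ := Finset.card_eq_one.mp h
        subst hy
        by_cases hyg : y = g
        · subst hyg; simp
        · have hyP : y ∈ P := diam2_sing hd hA hPF hP2
          rw [hPw] at hyP
          rcases Finset.mem_insert.mp hyP with h' | h'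
          · exact absurd h' hyg
          · rw [Finset.mem_singleton.mp h', ← hxw]; simp
      · obtain ⟨z, hzg, hz⟩ := two_mem A g h (hcom A hA h)
        have hxA : x ∈ A := diam2_sing hd hxF hA h
        have : x = z := by
          rw [hz] at hxA
          rcases Finset.mem_insert.mp hxA with h' | h'
          · exact absurd h' hxg
          · exact Finset.mem_singleton.mp h'
        subst this
        simp [hz]
    calc F.card ≤ _ := Finset.card_le_card hFsub
      _ ≤ 4 := card_le_four _ _ _ _
      _ ≤ T.card + 1 := by omega
  · push_neg at hsx
    have hFsub : F ⊆ insert ∅ (insert {g} ((T.erase g).image fun z => ({g, z} : Finset β))) := by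
      intro A hA
      have hAc := hcard A hA
      interval_cases h : A.card
      · simp [Finset.card_eq_zero.mp h]
      · obtain ⟨y, hy⟩ := Finset.card_eq_one.mp h
        subst hy
        have : y = g := hsx y hA
        subst this; simp
      · obtain ⟨z, hzg, hz⟩ := two_mem A g h (hcom A hA h)
        have hzT : z ∈ T := hsub A hA (by rw [hz]; simp)
        refine Finset.mem_insert.mpr (Or.inr (Finset.mem_insert.mpr (Or.inr ?_)))
        exact Finset.mem_image.mpr ⟨z, Finset.mem_erase.mpr ⟨hzg, hzT⟩, hz.symm⟩
    calc F.card ≤ _ := Finset.card_le_card hFsub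
      _ ≤ ((T.erase g).image fun z => ({g, z} : Finset β)).card + 2 := by
          refine (Finset.card_insert_le _ _).trans (Nat.succ_le_succ (Finset.card_insert_le _ _))
      _ ≤ (T.erase g).card + 2 := by
          exact Nat.add_le_add_right (Finset.card_image_le) 2
      _ ≤ T.card + 1 := by rw [Finset.card_erase_of_mem hgT]; omega


lemma pair_eq_of_mem {A : Finset β} {u v : β} (h2 : A.card = 2) (hu : u ∈ A) (hv : v ∈ A)
    (huv : u ≠ v) : A = {u, v} := by
  have hsub : ({u, v} : Finset β) ⊆ A := by
    intro t ht
    rcases Finset.mem_insert.mp ht with rfl | ht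
    · exact hu
    · exact (Finset.mem_singleton.mp ht) ▸ hv
  have hc : ({u, v} : Finset β).card = 2 := Finset.card_pair huv
  exact (Finset.eq_of_subset_of_card_le hsub (by omega)).symm

lemma inter_singleton_elem {A B : Finset β} {u : β} (h : A ∩ B = {u}) : u ∈ A ∧ u ∈ B := by
  have : u ∈ A ∩ B := h ▸ Finset.mem_singleton_self u
  exact ⟨(Finset.mem_inter.mp this).1, (Finset.mem_inter.mp this).2⟩

lemma diam2 (hT : 3 ≤ T.card) (hsub : ∀ A ∈ F, A ⊆ T) (h0 : ∅ ∈ F)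
    (hd : ∀ A ∈ F, ∀ B ∈ F, (symmDiff A B).card ≤ 2) : F.card ≤ T.card + 1 := by
  classical
  have hcard : ∀ A ∈ F, A.card ≤ 2 := by
    intro A hA
    have h := hd A hA ∅ h0
    have : symmDiff A (∅ : Finset β) = A := by
      rw [show (∅ : Finset β) = ⊥ from rfl, symmDiff_bot]
    rwa [this] at h
  by_cases hP : ∃ P ∈ F, P.card = 2
  swap
  · push_neg at hP
    have hFsub : F ⊆ insert ∅ (T.image fun x => ({x} : Finset β)) := by
      intro A hA
      have hAc := hcard A hA
      have hne := hP A hA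
      interval_cases h : A.card
      · simp [Finset.card_eq_zero.mp h]
      · obtain ⟨y, hy⟩ := Finset.card_eq_one.mp h
        subst hy
        have : y ∈ T := hsub _ hA (Finset.mem_singleton_self y)
        exact Finset.mem_insert.mpr (Or.inr (Finset.mem_image.mpr ⟨y, this, rfl⟩))
      · exact absurd rfl hne
    calc F.card ≤ _ := Finset.card_le_card hFsub
      _ ≤ (T.image fun x => ({x} : Finset β)).card + 1 := Finset.card_insert_le _ _
      _ ≤ T.card + 1 := Nat.add_le_add_right Finset.card_image_le 1
  · obtain ⟨P, hPF, hP2⟩ := hP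
    obtain ⟨a, b, hab, hPab⟩ := Finset.card_eq_two.mp hP2
    have haP : a ∈ P := by rw [hPab]; simp
    have hbP : b ∈ P := by rw [hPab]; simp
    have haT : a ∈ T := hsub P hPF haP
    have hbT : b ∈ T := hsub P hPF hbP
    by_cases hca : ∀ A ∈ F, A.card = 2 → a ∈ A
    · exact diam2_common hT hsub h0 hd hcard a haT ⟨P, hPF, hP2⟩ hca
    by_cases hcb : ∀ A ∈ F, A.card = 2 → b ∈ A
    · exact diam2_common hT hsub h0 hd hcard b hbT ⟨P, hPF, hP2⟩ hcb
    push_neg at hca hcb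
    obtain ⟨Q, hQF, hQ2, haQ⟩ := hca
    obtain ⟨R, hRF, hR2, hbR⟩ := hcb
    have hPQ : P ≠ Q := fun h => haQ (h ▸ haP)
    have hPR : P ≠ R := fun h => hbR (h ▸ hbP)
    -- P ∩ Q = {b}
    obtain ⟨z1, hz1⟩ := Finset.card_eq_one.mp (diam2_two hd hPF hQF hP2 hQ2 hPQ)
    have hz1b : z1 = b := by
      obtain ⟨hz1P, hz1Q⟩ := inter_singleton_elem hz1
      rw [hPab] at hz1P
      rcases Finset.mem_insert.mp hz1P with rfl | h'
      · exact absurd hz1Q haQ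
      · exact Finset.mem_singleton.mp h'
    have hPQi : P ∩ Q = {b} := hz1b ▸ hz1
    have hbQ : b ∈ Q := (inter_singleton_elem hPQi).2
    -- P ∩ R = {a}
    obtain ⟨z2, hz2⟩ := Finset.card_eq_one.mp (diam2_two hd hPF hRF hP2 hR2 hPR)
    have hz2a : z2 = a := by
      obtain ⟨hz2P, hz2R⟩ := inter_singleton_elem hz2
      rw [hPab] at hz2P
      rcases Finset.mem_insert.mp hz2P with rfl | h'
      · rfl
      · exact absurd ((Finset.mem_singleton.mp h') ▸ hz2R) hbR
    have hPRi : P ∩ R = {a} := hz2a ▸ hz2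
    have haR : a ∈ R := (inter_singleton_elem hPRi).2
    -- Q ∩ R = {c}
    have hQR : Q ≠ R := fun h => hbR (h ▸ hbQ)
    obtain ⟨c, hQRi⟩ := Finset.card_eq_one.mp (diam2_two hd hQF hRF hQ2 hR2 hQR)
    have hcQ : c ∈ Q := (inter_singleton_elem hQRi).1
    have hcR : c ∈ R := (inter_singleton_elem hQRi).2
    have hcb' : c ≠ b := fun h => hbR (h ▸ hcR)
    have hca' : c ≠ a := fun h => haQ (h ▸ hcQ)
    have hQbc : Q = {b, c} := pair_eq_of_mem hQ2 hbQ hcQ (Ne.symm hcb')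
    have hRac : R = {a, c} := pair_eq_of_mem hR2 haR hcR (Ne.symm hca')
    have hFsub : F ⊆ {∅, P, Q, R} := by
      intro A hA
      have hAc := hcard A hA
      simp only [Finset.mem_insert, Finset.mem_singleton]
      interval_cases h : A.card
      · left; exact Finset.card_eq_zero.mp h
      · obtain ⟨y, hy⟩ := Finset.card_eq_one.mp h
        subst hy
        exfalso
        have hyP : y ∈ P := diam2_sing hd hA hPF hP2
        have hyQ : y ∈ Q := diam2_sing hd hA hQF hQ2
        have hyR : y ∈ R := diam2_sing hd hA hRF hR2
        rw [hPab] at hyP; rw [hQbc] at hyQ; rw [hRac] at hyR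
        simp only [Finset.mem_insert, Finset.mem_singleton] at hyP hyQ hyR
        rcases hyP with rfl | rfl
        · rcases hyQ with h' | h'
          · exact hab h'
          · exact hca' h'.symm
        · rcases hyR with h' | h'
          · exact hab h'.symm
          · exact hcb' h'.symm
      · -- 2-sets
        by_cases hAP : A = P
        · right; left; exact hAP
        by_cases hAQ : A = Q
        · right; right; left; exact hAQ
        by_cases hAR : A = R
        · right; right; right; exact hAR
        exfalso
        obtain ⟨u, hu⟩ := Finset.card_eq_one.mp (diam2_two hd hA hPF h hP2 hAP)
        obtain ⟨v, hv⟩ := Finset.card_eq_one.mp (diam2_two hd hA hQF h hQ2 hAQ)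
        obtain ⟨w, hw⟩ := Finset.card_eq_one.mp (diam2_two hd hA hRF h hR2 hAR)
        obtain ⟨huA, huP⟩ := inter_singleton_elem hu
        obtain ⟨hvA, hvQ⟩ := inter_singleton_elem hv
        obtain ⟨hwA, hwR⟩ := inter_singleton_elem hw
        by_cases huv : u = v
        · -- u ∈ P ∩ Q = {b}
          have hub : u = b := by
            have : u ∈ P ∩ Q := Finset.mem_inter.mpr ⟨huP, huv ▸ hvQ⟩
            rw [hPQi] at this; exact Finset.mem_singleton.mp this
          by_cases hwu : w = u
          · exact hbR (hub ▸ hwu ▸ hwR)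
          · have hAuw : A = {u, w} := pair_eq_of_mem h huA hwA (Ne.symm hwu)
            rw [hRac] at hwR
            rcases Finset.mem_insert.mp hwR with rfl | h'
            · exact hAP (by rw [hAuw, hub, hPab, Finset.pair_comm])
            · rw [Finset.mem_singleton.mp h'] at hAuw
              exact hAQ (by rw [hAuw, hub, hQbc])
        · have hAuv : A = {u, v} := pair_eq_of_mem h huA hvA huv
          have hwuv : w = u ∨ w = v := by
            rw [hAuv] at hwA
            simpa using hwA
          rcases hwuv with h1 | h1
          · -- w=u : u ∈ P ∩ R = {a}
            have huR : u ∈ R := h1 ▸ hwR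
            have hua : u = a := by
              have : u ∈ P ∩ R := Finset.mem_inter.mpr ⟨huP, huR⟩
              rw [hPRi] at this; exact Finset.mem_singleton.mp this
            rw [hQbc] at hvQ
            rcases Finset.mem_insert.mp hvQ with rfl | h'
            · exact hAP (by rw [hAuv, hua, hPab])
            · rw [Finset.mem_singleton.mp h'] at hAuv
              exact hAR (by rw [hAuv, hua, hRac])
          · -- w=v : v ∈ Q ∩ R = {c}
            have hvR : v ∈ R := h1 ▸ hwR
            have hvc : v = c := by
              have : v ∈ Q ∩ R := Finset.mem_inter.mpr ⟨hvQ, hvR⟩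
              rw [hQRi] at this; exact Finset.mem_singleton.mp this
            rw [hPab] at huP
            rcases Finset.mem_insert.mp huP with rfl | h'
            · exact hAR (by rw [hAuv, hvc, hRac])
            · rw [Finset.mem_singleton.mp h'] at hAuv
              exact hAQ (by rw [hAuv, hvc, hQbc])
    calc F.card ≤ _ := Finset.card_le_card hFsub
      _ ≤ 4 := card_le_four _ _ _ _
      _ ≤ T.card + 1 := by omega

end diam2

section rep

variable {α : Type*} {n : ℕ} {M : Matroid α} {φ : α → (Fin n → ZMod 2)}

lemma char2_addself (v : Fin n → ZMod 2) : v + v = 0 := by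
  ext i; exact CharTwo.add_self_eq_zero _

lemma char2_sub (u v : Fin n → ZMod 2) : u - v = u + v := by
  rw [sub_eq_add_neg, neg_eq_of_add_eq_zero_left (char2_addself v)]

lemma zmod2_eq_one {x : ZMod 2} (h : x ≠ 0) : x = 1 := by
  fin_cases x
  · exact absurd rfl h
  · rfl

lemma indicator_combination (S : Finset α) :
    Finsupp.linearCombination (ZMod 2) φ (Finsupp.indicator S fun _ _ => 1) = ∑ a ∈ S, φ a := by
  classical
  rw [Finsupp.linearCombination_apply]
  have hsup : (Finsupp.indicator S fun _ _ => (1 : ZMod 2)).support ⊆ S :=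
    Finset.coe_subset.mp (Finsupp.support_indicator_subset S _)
  rw [Finsupp.sum_of_support_subset (Finsupp.indicator S fun _ _ => (1 : ZMod 2)) hsup
    (fun i a => a • φ i) (fun i _ => zero_smul _ (φ i))]
  refine Finset.sum_congr rfl fun a ha => ?_
  rw [Finsupp.indicator_of_mem ha, one_smul]

lemma indicator_supported (S : Finset α) (D : Set α) (h : ↑S ⊆ D) :
    (Finsupp.indicator S fun _ _ => (1 : ZMod 2)) ∈ Finsupp.supported (ZMod 2) (ZMod 2) D :=
  (Finsupp.mem_supported _ _).mpr ((Finset.coe_subset.mpr (Finsupp.support_indicator_subset S _)).trans h)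

lemma indicator_ne_zero {S : Finset α} (h : S.Nonempty) :
    (Finsupp.indicator S fun _ _ => (1 : ZMod 2)) ≠ 0 := by
  obtain ⟨a, ha⟩ := h
  intro h0
  have := Finsupp.indicator_of_mem ha (fun _ _ => (1 : ZMod 2))
  rw [h0] at this
  simp at this

lemma sum_symmDiff' [DecidableEq α] (S S' : Finset α) :
    ∑ a ∈ symmDiff S S', φ a = (∑ a ∈ S, φ a) + ∑ a ∈ S', φ a := by
  have h1 : symmDiff S S' = (S ∪ S') \ (S ∩ S') := by rw [symmDiff_eq_sup_sdiff_inf]; rfl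
  have h2 : S ∩ S' ⊆ S ∪ S' := Finset.inter_subset_left.trans Finset.subset_union_left
  have h3 := Finset.sum_sdiff (f := φ) h2
  have h4 := Finset.sum_union_inter (s₁ := S) (s₂ := S') (f := φ)
  rw [h1]
  have h5 : ∑ a ∈ (S ∪ S') \ (S ∩ S'), φ a
      = (∑ a ∈ (S ∪ S') \ (S ∩ S'), φ a) + ((∑ a ∈ S ∩ S', φ a) + (∑ a ∈ S ∩ S', φ a)) := by
    rw [char2_addself, add_zero]
  rw [h5, ← add_assoc, h3, h4]

variable (hrep : ∀ I, I ⊆ M.E → (M.Indep I ↔ LinearIndependent (ZMod 2) (fun x : I => φ x)))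
include hrep

lemma not_indep_of_zero_sum {S : Finset α} (hSE : ↑S ⊆ M.E) (hne : S.Nonempty)
    (hsum : ∑ a ∈ S, φ a = 0) : ¬ M.Indep ↑S := by
  intro hI
  have hli : LinearIndependent (ZMod 2) (φ ∘ (Subtype.val : (↑S : Set α) → α)) :=
    (hrep _ hSE).mp hI
  have := (linearIndepOn_iff (v := φ) (s := ↑S)).mp (linearIndependent_comp_subtype_iff.mp hli) (Finsupp.indicator S fun _ _ => 1)
    (indicator_supported S _ (by exact_mod_cast subset_rfl))
    (by rw [indicator_combination, hsum])
  exact indicator_ne_zero hne this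

lemma dep_of_zero_sum {S : Finset α} (hSE : ↑S ⊆ M.E) (hne : S.Nonempty)
    (hsum : ∑ a ∈ S, φ a = 0) : M.Dep ↑S :=
  Matroid.dep_iff.mpr ⟨not_indep_of_zero_sum hrep hSE hne hsum, hSE⟩

lemma zero_sum_of_dep {D : Set α} (hD : M.Dep D) :
    ∃ S : Finset α, ↑S ⊆ D ∧ S.Nonempty ∧ ∑ a ∈ S, φ a = 0 := by
  have hni : ¬ LinearIndependent (ZMod 2) (φ ∘ (Subtype.val : D → α)) := fun h =>
    hD.1 ((hrep D hD.subset_ground).mpr h)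
  obtain ⟨f, hf1, hf2, hf3⟩ := (by have := mt (linearIndepOn_iff (R := ZMod 2) (v := φ) (s := D)).mpr hni; push_neg at this; exact this)
  refine ⟨f.support, (Finsupp.mem_supported _ _).mp hf1, Finsupp.support_nonempty_iff.mpr hf3, ?_⟩
  rw [← hf2, Finsupp.linearCombination_apply, Finsupp.sum]
  refine Finset.sum_congr rfl fun i hi => ?_
  rw [zmod2_eq_one (Finsupp.mem_support_iff.mp hi), one_smul]

lemma circuit_zero_sum {C : Set α} (hC : M.Circuit C) (hCf : C.Finite) :
    ∑ a ∈ hCf.toFinset, φ a = 0 := by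
  obtain ⟨S, hS1, hS2, hS3⟩ := zero_sum_of_dep hrep hC.1
  have hSC : (↑S : Set α) = C := by
    by_contra hne'
    exact not_indep_of_zero_sum hrep (hS1.trans hC.1.subset_ground) hS2 hS3
      (hC.2 _ (lt_of_le_of_ne hS1 hne'))
  have hSt : hCf.toFinset = S := Finset.coe_injective (by rw [Set.Finite.coe_toFinset, hSC])
  rw [hSt]; exact hS3

lemma exists_circuit_through (e : α) : ∀ (N : ℕ) (S : Finset α), S.card ≤ N → ↑S ⊆ M.E →
    e ∈ S → (∑ a ∈ S, φ a = 0) → ∃ Z : Finset α, Z ⊆ S ∧ e ∈ Z ∧ M.Circuit ↑Z := by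
  classical
  intro N
  induction N with
  | zero =>
    intro S hcard heS
    intro h _
    simp only [Nat.le_zero, Finset.card_eq_zero] at hcard
    subst hcard
    simp at h
  | succ N ih =>
    intro S hcard hSE heS hsum
    by_cases hC : ∀ D, D ⊂ (↑S : Set α) → M.Indep D
    · exact ⟨S, subset_rfl, heS,
        ⟨dep_of_zero_sum hrep hSE ⟨e, heS⟩ hsum, hC⟩⟩
    · push_neg at hC
      obtain ⟨D, hDS, hDni⟩ := hC
      have hDdep : M.Dep D := Matroid.dep_iff.mpr ⟨hDni, hDS.subset.trans hSE⟩
      obtain ⟨S', hS'D, hS'ne, hS'sum⟩ := zero_sum_of_dep hrep hDdep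
      have hS'sub : S' ⊆ S := Finset.coe_subset.mp (hS'D.trans hDS.subset)
      have hS'ssub : S' ⊂ S := by
        refine lt_of_le_of_ne hS'sub fun h => ?_
        subst h
        exact (hDS.not_subset) (hS'D.antisymm hDS.subset ▸ subset_rfl)
      by_cases heS' : e ∈ S'
      · obtain ⟨Z, hZ1, hZ2, hZ3⟩ := ih S' (by
          have := Finset.card_lt_card hS'ssub; omega)
          (fun x hx => hSE (hS'sub hx)) heS' hS'sum
        exact ⟨Z, hZ1.trans hS'sub, hZ2, hZ3⟩
      · have hsum'' : ∑ a ∈ S \ S', φ a = 0 := by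
          have h2 := Finset.sum_sdiff (f := φ) hS'sub
          rw [hS'sum, hsum] at h2
          simpa using h2
        have hssub'' : S \ S' ⊂ S := Finset.sdiff_ssubset hS'sub hS'ne
        obtain ⟨Z, hZ1, hZ2, hZ3⟩ := ih (S \ S') (by
          have := Finset.card_lt_card hssub''; omega)
          (fun x hx => hSE (Finset.sdiff_subset hx))
          (Finset.mem_sdiff.mpr ⟨heS, heS'⟩) hsum''
        exact ⟨Z, hZ1.trans Finset.sdiff_subset, hZ2, hZ3⟩

lemma phi_ne_zero (hsimple : M.Simple) {a : α} (ha : a ∈ M.E) : φ a ≠ 0 := by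
  have hI : M.Indep {a} := by
    have := hsimple a ha a ha
    rwa [Set.pair_eq_singleton] at this
  have hli := (hrep {a} (by simpa)).mp hI
  exact hli.ne_zero ⟨a, rfl⟩

lemma phi_inj (hsimple : M.Simple) {a b : α} (ha : a ∈ M.E) (hb : b ∈ M.E)
    (hab : a ≠ b) (h : φ a = φ b) : False := by
  have hI : M.Indep {a, b} := hsimple a ha b hb
  have hsub : ({a, b} : Set α) ⊆ M.E := by
    intro x hx
    rcases hx with rfl | hx
    · exact ha
    · exact (Set.mem_singleton_iff.mp hx) ▸ hb
  have hli := (hrep _ hsub).mp hI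
  have hinj := hli.injective
  have : (⟨a, by simp⟩ : ({a, b} : Set α)) = ⟨b, by simp⟩ := hinj h
  exact hab (by simpa using this)

omit hrep in
lemma subset_sum_of_mem_span {T : Finset α} {w : Fin n → ZMod 2}
    (hw : w ∈ Submodule.span (ZMod 2) (φ '' ↑T)) : ∃ S ⊆ T, ∑ a ∈ S, φ a = w := by
  obtain ⟨l, hl, hlw⟩ := (Finsupp.mem_span_image_iff_linearCombination _).mp hw
  refine ⟨l.support, Finset.coe_subset.mp ((Finsupp.mem_supported _ _).mp hl), ?_⟩
  rw [← hlw, Finsupp.linearCombination_apply, Finsupp.sum]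
  refine Finset.sum_congr rfl fun i hi => ?_
  rw [zmod2_eq_one (Finsupp.mem_support_iff.mp hi), one_smul]

omit hrep in
lemma sum_inj {T : Finset α}
    (hli : LinearIndependent (ZMod 2) (φ ∘ (Subtype.val : (↑T : Set α) → α)))
    {S S' : Finset α} (hS : S ⊆ T) (hS' : S' ⊆ T)
    (h : ∑ a ∈ S, φ a = ∑ a ∈ S', φ a) : S = S' := by
  classical
  have hc := (linearIndepOn_iff (v := φ) (s := ↑T)).mp (linearIndependent_comp_subtype_iff.mp hli)
    ((Finsupp.indicator S fun _ _ => 1) - (Finsupp.indicator S' fun _ _ => 1))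
    (Submodule.sub_mem _ (indicator_supported S _ (by exact_mod_cast hS))
      (indicator_supported S' _ (by exact_mod_cast hS')))
    (by rw [map_sub, indicator_combination, indicator_combination, h, sub_self])
  ext a
  have h2 : (Finsupp.indicator S fun _ _ => (1 : ZMod 2)) a
      = (Finsupp.indicator S' fun _ _ => (1 : ZMod 2)) a := by
    have := congrArg (fun g : α →₀ ZMod 2 => g a) hc
    simpa [sub_eq_zero] using this
  constructor
  · intro haS
    by_contra haS'
    rw [Finsupp.indicator_of_mem haS, Finsupp.indicator_of_notMem haS'] at h2
    exact one_ne_zero h2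
  · intro haS'
    by_contra haS
    rw [Finsupp.indicator_of_notMem haS, Finsupp.indicator_of_mem haS'] at h2
    exact one_ne_zero h2.symm

end rep

section mainthm

open Module Submodule

lemma char2_eq_of_add_eq_zero {n : ℕ} {u v : Fin n → ZMod 2} (h : u + v = 0) : u = v := by
  calc u = u + (v + v) := by rw [char2_addself, add_zero]
    _ = (u + v) + v := by rw [add_assoc]
    _ = v := by rw [h, zero_add]

/-- For integers `r ≥ 5` and `0 ≤ k ≤ (r-2)/3`, a simple binary matroid of rank `r`
with no coloops and a `k`-loose element has at most `2^k (r - k + 1)` elements. -/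
theorem size_bound_one_k_loose {α : Type*} (r k : ℕ) (hr : 5 ≤ r) (hk : k ≤ (r - 2) / 3)
    (M : Matroid α) [M.Finite] (hsimple : M.Simple)
    (hbinary : M.RepresentableOver (ZMod 2)) (hrank : M.rk = r)
    (hcoloop : ∀ e, ¬ M.Coloop e) (e : α) (he : M.KLoose k e) :
    M.E.ncard ≤ 2 ^ k * (r - k + 1) := by
  classical
  obtain ⟨n, φ, hrep⟩ := hbinary
  obtain ⟨heE, hloose⟩ := he
  have hEfin : M.E.Finite := M.ground_finite
  have hkr : 3 * k ≤ r - 2 := by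
    have := (Nat.le_div_iff_mul_le (by norm_num : 0 < 3)).mp hk; omega
  -- all bases have cardinality r
  have hbase_card : ∀ B, M.IsBase B → B.ncard = r := by
    intro B hB
    rw [← hrank]
    have hset : {m | ∃ B', M.IsBase B' ∧ B'.ncard = m} = {B.ncard} := by
      ext m
      simp only [Set.mem_setOf_eq, Set.mem_singleton_iff]
      constructor
      · rintro ⟨B', hB', rfl⟩; exact hB'.ncard_eq_ncard_of_isBase hB
      · rintro rfl; exact ⟨B, hB, rfl⟩
    rw [Matroid.rk, hset, csSup_singleton]
  obtain ⟨B, hB⟩ := M.exists_isBase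
  have hBE : B ⊆ M.E := hB.subset_ground
  have hBfin : B.Finite := hB.finite
  have hBcard : B.ncard = r := hbase_card B hB
  set P := Submodule.span (ZMod 2) (φ '' M.E) with hP
  -- every element of E is spanned by B
  have hspanB : ∀ x ∈ M.E, φ x ∈ Submodule.span (ZMod 2) (φ '' B) := by
    intro x hx
    by_cases hxB : x ∈ B
    · exact subset_span ⟨x, hxB, rfl⟩
    · have hdep : M.Dep (insert x B) := hB.insert_dep ⟨hx, hxB⟩
      obtain ⟨S, hS1, hS2, hS3⟩ := zero_sum_of_dep hrep hdep
      have hxS : x ∈ S := by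
        by_contra hxS
        have hSB : ↑S ⊆ B := by
          intro y hy
          rcases hS1 hy with rfl | h'
          · exact absurd hy (fun h => hxS (by exact_mod_cast h))
          · exact h'
        exact not_indep_of_zero_sum hrep (hSB.trans hBE) hS2 hS3 (hB.indep.subset hSB)
      have hx' : φ x = ∑ a ∈ S.erase x, φ a := by
        have h1 := Finset.add_sum_erase S φ hxS
        rw [hS3] at h1
        exact char2_eq_of_add_eq_zero h1
      rw [hx']
      refine Submodule.sum_mem _ fun a ha => subset_span ⟨a, ?_, rfl⟩
      have haS : a ∈ S := Finset.mem_of_mem_erase ha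
      have hax : a ≠ x := Finset.ne_of_mem_erase ha
      rcases hS1 haS with h' | h'
      · exact absurd h' hax
      · exact h'
  have hPle : P ≤ Submodule.span (ZMod 2) (φ '' B) :=
    Submodule.span_le.mpr (by rintro _ ⟨x, hx, rfl⟩; exact hspanB x hx)
  have hPr : Module.finrank (ZMod 2) P ≤ r := by
    refine (Submodule.finrank_mono hPle).trans ?_
    have h1 : φ '' B = ↑(hBfin.toFinset.image φ) := by
      rw [Finset.coe_image, Set.Finite.coe_toFinset]
    rw [h1]
    refine le_trans (finrank_span_finset_le_card _) ?_
    refine (Finset.card_image_le).trans ?_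
    rw [← Set.ncard_eq_toFinset_card _ hBfin, hBcard]
  -- a circuit through e exists
  have hCex : ∃ Z : Finset α, ↑Z ⊆ M.E ∧ e ∈ Z ∧ M.Circuit ↑Z := by
    obtain ⟨B0, hB0, heB0⟩ : ∃ B0, M.IsBase B0 ∧ e ∉ B0 := by
      by_contra h; push_neg at h
      exact hcoloop e ⟨heE, fun B' hB' => h B' hB'⟩
    have hdep : M.Dep (insert e B0) := hB0.insert_dep ⟨heE, heB0⟩
    obtain ⟨S, hS1, hS2, hS3⟩ := zero_sum_of_dep hrep hdep
    have hSE : ↑S ⊆ M.E := hS1.trans (Set.insert_subset heE hB0.subset_ground)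
    have heS : e ∈ S := by
      by_contra heS
      have hSB : ↑S ⊆ B0 := by
        intro y hy
        rcases hS1 hy with rfl | h'
        · exact absurd hy (fun h => heS (by exact_mod_cast h))
        · exact h'
      exact not_indep_of_zero_sum hrep hSE hS2 hS3 (hB0.indep.subset hSB)
    obtain ⟨Z, hZ1, hZ2, hZ3⟩ := exists_circuit_through hrep e S.card S le_rfl hSE heS hS3
    exact ⟨Z, (Finset.coe_subset.mpr hZ1).trans hSE, hZ2, hZ3⟩
  -- minimum circuit through e
  have h𝒞fin : {Z : Finset α | ↑Z ⊆ M.E ∧ e ∈ Z ∧ M.Circuit ↑Z}.Finite := by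
    refine Set.Finite.subset (hEfin.toFinset.powerset : Finset (Finset α)).finite_toSet ?_
    intro Z hZ
    simp only [Finset.coe_powerset, Set.mem_preimage, Set.mem_powerset_iff]
    intro z hz
    exact (Set.Finite.coe_toFinset hEfin).symm ▸ hZ.1 hz
  obtain ⟨C, hC𝒞, hCmin⟩ := Set.exists_min_image _ Finset.card h𝒞fin ⟨hCex.choose, hCex.choose_spec⟩
  obtain ⟨hCE, heC, hCcirc⟩ := hC𝒞
  set c := C.card with hc
  have hminD : ∀ D : Finset α, ↑D ⊆ M.E → e ∈ D → (∑ a ∈ D, φ a = 0) → c ≤ D.card := by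
    intro D hDE heD hDsum
    obtain ⟨Z, hZ1, hZ2, hZ3⟩ := exists_circuit_through hrep e D.card D le_rfl hDE heD hDsum
    exact (hCmin Z ⟨(Finset.coe_subset.mpr hZ1).trans hDE, hZ2, hZ3⟩).trans
      (Finset.card_le_card hZ1)
  have hkc : r - k < c := by
    have := hloose ↑C hCcirc (by exact_mod_cast heC)
    rwa [hrank, Set.ncard_coe_finset] at this
  -- T and W
  set T := C.erase e with hT
  have hTC : T ⊆ C := Finset.erase_subset e C
  have hTE : ↑T ⊆ M.E := (Finset.coe_subset.mpr hTC).trans hCE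
  have hTcard : T.card = c - 1 := Finset.card_erase_of_mem heC
  have hc1 : 1 ≤ c := Finset.card_pos.mpr ⟨e, heC⟩
  have heT : e ∉ T := Finset.notMem_erase e C
  have hTindep : M.Indep ↑T := by
    refine hCcirc.2 ↑T ?_
    exact_mod_cast Finset.erase_ssubset heC
  have hTli : LinearIndependent (ZMod 2) (fun x : (↑T : Set α) => φ x) := (hrep _ hTE).mp hTindep
  set W := Submodule.span (ZMod 2) (φ '' (↑T : Set α)) with hW
  have hsumC : ∑ a ∈ C, φ a = 0 := by
    have hCf : (↑C : Set α).Finite := C.finite_toSet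
    have h1 := circuit_zero_sum hrep hCcirc hCf
    rwa [show hCf.toFinset = C from Finset.coe_injective (by simp)] at h1
  have hφe : φ e = ∑ a ∈ T, φ a := by
    have h1 := Finset.add_sum_erase C φ heC
    rw [hsumC] at h1
    exact char2_eq_of_add_eq_zero h1
  have hφeW : φ e ∈ W := by
    rw [hφe]
    exact Submodule.sum_mem _ fun a ha => subset_span ⟨a, by exact_mod_cast ha, rfl⟩
  have hCW : ∀ a ∈ C, φ a ∈ W := by
    intro a ha
    by_cases hae : a = e
    · subst hae; exact hφeW
    · exact subset_span ⟨a, by exact_mod_cast Finset.mem_erase.mpr ⟨hae, ha⟩, rfl⟩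
  have hWle : W ≤ P := Submodule.span_mono (Set.image_mono (f := φ) hTE)
  have hWrank : Module.finrank (ZMod 2) W = T.card := by
    letI : Fintype ↥(φ '' (↑T : Set α)) := (T.finite_toSet.image φ).fintype
    rw [hW, finrank_span_set_eq_card (LinearIndepOn.id_image (linearIndependent_set_coe_iff.mp hTli))]
    have himeq : (φ '' (↑T : Set α)).toFinset = T.image φ := by
      ext v; simp
    rw [himeq]
    refine Finset.card_image_of_injOn ?_
    intro a ha b hb hab
    by_contra hne
    exact phi_inj hrep hsimple (hTE (by exact_mod_cast ha)) (hTE (by exact_mod_cast hb)) hne hab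
  have hTr : T.card ≤ r := by
    rw [← hWrank]
    exact (Submodule.finrank_mono hWle).trans hPr
  have hT3 : 3 ≤ T.card := by omega
  -- quotient map and fibers
  set q := W.mkQ with hq
  set ψ : α → ((Fin n → ZMod 2) ⧸ W) := fun a => q (φ a) with hψ
  set Efin := hEfin.toFinset with hEf
  have hEcard : M.E.ncard = Efin.card := Set.ncard_eq_toFinset_card _ hEfin
  have hcT : c = T.card + 1 := by omega
  have hpair : ∀ u ∈ M.E, ∀ w ∈ M.E, u ∉ C → w ∉ C → u ≠ w →
      ∀ S, S ⊆ T → (∑ a ∈ S, φ a = φ u + φ w) → S.card ≤ 2 := by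
    intro u hu w hw huC hwC huw S hST hSsum
    set D := insert e (insert u (insert w (T \ S))) with hD
    have hwT : w ∉ T \ S := fun h => hwC (hTC (Finset.mem_sdiff.mp h).1)
    have huT : u ∉ insert w (T \ S) := by
      simp only [Finset.mem_insert]
      rintro (rfl | h)
      · exact huw rfl
      · exact huC (hTC (Finset.mem_sdiff.mp h).1)
    have heD' : e ∉ insert u (insert w (T \ S)) := by
      simp only [Finset.mem_insert]
      rintro (rfl | rfl | h)
      · exact huC heC
      · exact hwC heC
      · exact heT (Finset.mem_sdiff.mp h).1
    have hTS : ∑ a ∈ T \ S, φ a = (∑ a ∈ T, φ a) - (∑ a ∈ S, φ a) :=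
      eq_sub_of_add_eq (Finset.sum_sdiff hST)
    have hDsum : ∑ a ∈ D, φ a = 0 := by
      rw [hD, Finset.sum_insert heD', Finset.sum_insert huT, Finset.sum_insert hwT,
        hTS, hSsum, hφe]
      have hre : ∑ a ∈ T, φ a + (φ u + (φ w + ((∑ a ∈ T, φ a) - (φ u + φ w))))
          = (∑ a ∈ T, φ a) + (∑ a ∈ T, φ a) := by abel
      rw [hre]
      exact char2_addself _
    have hDE : ↑D ⊆ M.E := by
      intro x hx
      simp only [hD, Finset.coe_insert, Set.mem_insert_iff, Finset.mem_coe] at hx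
      rcases hx with rfl | rfl | rfl | hx
      · exact heE
      · exact hu
      · exact hw
      · exact hTE (Finset.mem_sdiff.mp hx).1
    have hcD := hminD D hDE (Finset.mem_insert_self e _) hDsum
    have hcard : D.card = 3 + (T.card - S.card) := by
      rw [hD, Finset.card_insert_of_notMem heD', Finset.card_insert_of_notMem huT,
        Finset.card_insert_of_notMem hwT, Finset.card_sdiff_of_subset hST]
      omega
    have hScard : S.card ≤ T.card := Finset.card_le_card hST
    omega
  have hzero : ∀ u ∈ M.E, φ u ∈ W → u ∈ C := by
    intro u hu huW
    by_contra huC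
    obtain ⟨S, hST, hSsum⟩ := subset_sum_of_mem_span (φ := φ) (hW ▸ huW)
    have huT : u ∉ T \ S := fun h => huC (hTC (Finset.mem_sdiff.mp h).1)
    have heD' : e ∉ insert u (T \ S) := by
      simp only [Finset.mem_insert]
      rintro (rfl | h)
      · exact huC heC
      · exact heT (Finset.mem_sdiff.mp h).1
    have hTS : ∑ a ∈ T \ S, φ a = (∑ a ∈ T, φ a) - (∑ a ∈ S, φ a) :=
      eq_sub_of_add_eq (Finset.sum_sdiff hST)
    set D := insert e (insert u (T \ S)) with hD
    have hDsum : ∑ a ∈ D, φ a = 0 := by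
      rw [hD, Finset.sum_insert heD', Finset.sum_insert huT, hTS, hSsum, hφe]
      have hre : ∑ a ∈ T, φ a + (φ u + ((∑ a ∈ T, φ a) - φ u))
          = (∑ a ∈ T, φ a) + (∑ a ∈ T, φ a) := by abel
      rw [hre]
      exact char2_addself _
    have hDE : ↑D ⊆ M.E := by
      intro x hx
      simp only [hD, Finset.coe_insert, Set.mem_insert_iff, Finset.mem_coe] at hx
      rcases hx with rfl | rfl | hx
      · exact heE
      · exact hu
      · exact hTE (Finset.mem_sdiff.mp hx).1
    have hcD := hminD D hDE (Finset.mem_insert_self e _) hDsum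
    have hcard : D.card = 2 + (T.card - S.card) := by
      rw [hD, Finset.card_insert_of_notMem heD', Finset.card_insert_of_notMem huT,
        Finset.card_sdiff_of_subset hST]
      omega
    have hScard : S.card ≤ T.card := Finset.card_le_card hST
    have hS1 : S.card ≤ 1 := by omega
    interval_cases hSc : S.card
    · have : S = ∅ := Finset.card_eq_zero.mp hSc
      rw [this, Finset.sum_empty] at hSsum
      exact phi_ne_zero hrep hsimple hu hSsum.symm
    · obtain ⟨s, hs⟩ := Finset.card_eq_one.mp hSc
      rw [hs, Finset.sum_singleton] at hSsum
      have hsT : s ∈ T := hST (hs ▸ Finset.mem_singleton_self s)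
      have hsu : s ≠ u := fun h => huC (hTC (h ▸ hsT))
      exact phi_inj hrep hsimple (hTE (by exact_mod_cast hsT)) hu hsu hSsum
  have hfiber : ∀ y ∈ Efin.image ψ, (Efin.filter fun a => ψ a = y).card ≤ c := by
    intro y hy
    set F := Efin.filter (fun a => ψ a = y) with hF
    have hFE : ∀ u ∈ F, u ∈ M.E := fun u hu =>
      (Set.Finite.mem_toFinset hEfin).mp (Finset.mem_filter.mp hu).1
    by_cases hall : ∀ u ∈ F, φ u ∈ W
    · have hsubC : F ⊆ C := fun u hu => hzero u (hFE u hu) (hall u hu)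
      exact Finset.card_le_card hsubC
    · push_neg at hall
      obtain ⟨u1, hu1F, hu1W⟩ := hall
      have hccoset : ∀ u ∈ F, φ u + φ u1 ∈ W := by
        intro u huF
        have h1 : ψ u = ψ u1 := by
          rw [(Finset.mem_filter.mp huF).2, (Finset.mem_filter.mp hu1F).2]
        have h2 : φ u - φ u1 ∈ W := by
          have h1' := h1
          rw [hψ] at h1'
          simp only [hq, Submodule.mkQ_apply] at h1'
          exact (Submodule.Quotient.eq W).mp h1'
        rwa [char2_sub] at h2
      have hFnotC : ∀ u ∈ F, u ∉ C := by
        intro u huF huC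
        have h3 : φ u1 = φ u + (φ u + φ u1) := by
          rw [← add_assoc, char2_addself, zero_add]
        exact hu1W (h3 ▸ Submodule.add_mem _ (hCW u huC) (hccoset u huF))
      set g : α → Finset α := fun u =>
        if h : φ u + φ u1 ∈ Submodule.span (ZMod 2) (φ '' (↑T : Set α)) then
          (subset_sum_of_mem_span (φ := φ) h).choose else ∅ with hg
      have hgspec : ∀ u ∈ F, g u ⊆ T ∧ ∑ a ∈ g u, φ a = φ u + φ u1 := by
        intro u huF
        have hmem : φ u + φ u1 ∈ Submodule.span (ZMod 2) (φ '' (↑T : Set α)) :=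
          hW ▸ hccoset u huF
        rw [hg]
        simp only [dif_pos hmem]
        exact (subset_sum_of_mem_span (φ := φ) hmem).choose_spec
      have hg1 : ∀ u ∈ F, g u ⊆ T := fun u hu => (hgspec u hu).1
      have hg2 : ∀ u ∈ F, ∑ a ∈ g u, φ a = φ u + φ u1 := fun u hu => (hgspec u hu).2
      have hginj : Set.InjOn g ↑F := by
        intro u hu w hw h
        have h1 := hg2 u hu
        rw [h, hg2 w hw] at h1
        have h2 : φ w = φ u := add_right_cancel h1
        by_contra hne
        exact phi_inj hrep hsimple (hFE w hw) (hFE u hu) (Ne.symm hne) h2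
      have hcardim : (F.image g).card = F.card := Finset.card_image_of_injOn hginj
      have hTli' : LinearIndependent (ZMod 2) (φ ∘ (Subtype.val : (↑T : Set α) → α)) := hTli
      have hmem0 : ∅ ∈ F.image g := by
        refine Finset.mem_image.mpr ⟨u1, hu1F, ?_⟩
        refine sum_inj (φ := φ) hTli' (hg1 u1 hu1F) (Finset.empty_subset T) ?_
        rw [hg2 u1 hu1F, char2_addself, Finset.sum_empty]
      have hsubT : ∀ A ∈ F.image g, A ⊆ T := by
        intro A hA
        obtain ⟨u, hu, rfl⟩ := Finset.mem_image.mp hA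
        exact hg1 u hu
      have hdiam : ∀ A ∈ F.image g, ∀ B' ∈ F.image g, (symmDiff A B').card ≤ 2 := by
        intro A hA B' hB'
        obtain ⟨u, hu, rfl⟩ := Finset.mem_image.mp hA
        obtain ⟨w, hw, rfl⟩ := Finset.mem_image.mp hB'
        by_cases huw : u = w
        · subst huw
          rw [symmDiff_self]
          simp
        · have hsum : ∑ a ∈ symmDiff (g u) (g w), φ a = φ u + φ w := by
            rw [sum_symmDiff' (φ := φ), hg2 u hu, hg2 w hw]
            have hre : (φ u + φ u1) + (φ w + φ u1) = (φ u + φ w) + (φ u1 + φ u1) := by abel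
            rw [hre, char2_addself, add_zero]
          have hsdT : symmDiff (g u) (g w) ⊆ T := by
            intro a ha
            rcases Finset.mem_symmDiff.mp ha with ⟨h', _⟩ | ⟨h', _⟩
            · exact hg1 u hu h'
            · exact hg1 w hw h'
          exact hpair u (hFE u hu) w (hFE w hw) (hFnotC u hu) (hFnotC w hw) huw _ hsdT hsum
      have hd2 := diam2 hT3 hsubT hmem0 hdiam
      omega
  have himage : (Efin.image ψ).card ≤ 2 ^ (r - T.card) := by
    haveI : Finite ((Fin n → ZMod 2) ⧸ W) := Quotient.finite _
    letI : Fintype ((Fin n → ZMod 2) ⧸ W) := Fintype.ofFinite _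
    set P' := P.map q with hP'
    letI : Fintype ↥P' := Fintype.ofFinite _
    have hsub : Efin.image ψ ⊆ (↑P' : Set _).toFinset := by
      intro y hy
      obtain ⟨a, haE, rfl⟩ := Finset.mem_image.mp hy
      rw [Set.mem_toFinset]
      exact ⟨φ a, subset_span ⟨a, (Set.Finite.mem_toFinset hEfin).mp haE, rfl⟩, rfl⟩
    refine (Finset.card_le_card hsub).trans ?_
    rw [Set.toFinset_card]
    have hcc : Fintype.card ↥(↑P' : Set ((Fin n → ZMod 2) ⧸ W)) = Fintype.card ↥P' :=
      Fintype.card_congr (Equiv.subtypeEquivRight fun x => Iff.rfl)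
    rw [hcc, card_eq_pow_finrank (K := ZMod 2) (V := ↥P'), ZMod.card 2]
    refine Nat.pow_le_pow_right (by norm_num) ?_
    have hker : LinearMap.ker (q ∘ₗ P.subtype) = W.comap P.subtype := by
      rw [LinearMap.ker_comp, hq, Submodule.ker_mkQ]
    have hrange : LinearMap.range (q ∘ₗ P.subtype) = P' := by
      rw [LinearMap.range_comp, Submodule.range_subtype]
    have hrn := LinearMap.finrank_range_add_finrank_ker (q ∘ₗ P.subtype)
    rw [hker, hrange] at hrn
    have hkerrank : finrank (ZMod 2) (W.comap P.subtype) = T.card := by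
      rw [← hWrank]
      exact LinearEquiv.finrank_eq (Submodule.comapSubtypeEquivOfLe hWle)
    rw [hkerrank] at hrn
    omega
  have hcount : Efin.card ≤ 2 ^ (r - T.card) * c := by
    rw [Finset.card_eq_sum_card_image ψ Efin]
    calc ∑ y ∈ Efin.image ψ, (Efin.filter fun a => ψ a = y).card
        ≤ (Efin.image ψ).card • c := Finset.sum_le_card_nsmul _ _ c hfiber
      _ = (Efin.image ψ).card * c := smul_eq_mul _ _
      _ ≤ 2 ^ (r - T.card) * c := Nat.mul_le_mul_right c himage
  rw [hEcard]
  refine hcount.trans ?_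
  have hfin := nat_final r k T.card (by omega) hTr (by omega)
  have hcT : c = T.card + 1 := by omega
  rw [hcT]
  exact hfin

end mainthm
end

section
/- Let q be a prime power and let M be a simple GF(q)-representable matroid with no coloops that has two distinct k-loose elements e and f. Then r(M) ≤ (q+1)(k-1) + 2q, or {e, f} is a cocircuit of M. -/
/-! A `k`-loose element lies in the closure of no independent set of size less than `r - k`
that avoids it. Suppose a basis `B` avoids `e` and `f`, and write `e = ∑ c_b b`, `f = ∑ d_b b`.
Then `c` and `d` each vanish on at most `k` elements of `B`, and for every scalar `t` the set
`Z_t = {b | d_b = t c_b}` has at most `k + 1` elements: `f - t e` is spanned by `B \ Z_t`, which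
puts `f` in the closure of `insert e (B \ Z_t)`. Every `b` with `c_b ≠ 0` lies in `Z_{d_b / c_b}`,
so counting over the `q - 1` nonzero ratios gives `r ≤ 2k + (q - 1)(k + 1) = (q + 1)(k - 1) + 2q`.
If no basis avoids `e` and `f`, then `{e, f}` is codependent, and without coloops it is a
cocircuit. -/

open Finset in
theorem card_le_of_forall_card_filter_eq_mul_le {ι F : Type*} [GroupWithZero F] [Fintype F]
    [DecidableEq F] (s : Finset ι) (c d : ι → F) (k : ℕ) (hc : #{b ∈ s | c b = 0} ≤ k)
    (hd : #{b ∈ s | d b = 0} ≤ k) (hcd : ∀ t ≠ 0, #{b ∈ s | d b = t * c b} ≤ k + 1) :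
    #s ≤ 2 * k + (Fintype.card F - 1) * (k + 1) := by
  classical
  have hcover : s ⊆ {b ∈ s | c b = 0} ∪ {b ∈ s | d b = 0} ∪
      (univ.erase 0).biUnion (fun t => {b ∈ s | d b = t * c b}) := by
    intro b hb
    by_cases hcb : c b = 0
    · simp [hb, hcb]
    by_cases hdb : d b = 0
    · simp [hb, hdb]
    refine mem_union_right _ (mem_biUnion.2 ⟨d b / c b, ?_, ?_⟩)
    · simp [hcb, hdb]
    · simp [hb, div_mul_cancel₀ _ hcb]
  calc #s ≤ #{b ∈ s | c b = 0} + #{b ∈ s | d b = 0} +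
        ∑ t ∈ univ.erase 0, #{b ∈ s | d b = t * c b} :=
      (card_le_card hcover).trans <|
        (card_union_le _ _).trans (add_le_add (card_union_le _ _) card_biUnion_le)
    _ ≤ k + k + ∑ _t ∈ univ.erase (0 : F), (k + 1) := by
      gcongr with t ht
      exact hcd t (ne_of_mem_erase ht)
    _ = 2 * k + (Fintype.card F - 1) * (k + 1) := by
      rw [sum_const, card_erase_of_mem (mem_univ _), card_univ, smul_eq_mul]
      ring

namespace Matroid

variable {α : Type*} {M : Matroid α} {B C I Z : Set α} {e f x : α} {k : ℕ}

theorem circuit_iff_isCircuit : M.Circuit C ↔ M.IsCircuit C := by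
  rw [isCircuit_iff_forall_ssubset]
  rfl

theorem IsBase.rk_eq_ncard (hB : M.IsBase B) : M.rk = B.ncard := by
  have hbases : {n | ∃ B', M.IsBase B' ∧ B'.ncard = n} = {B.ncard} := by
    ext n
    constructor
    · rintro ⟨B', hB', rfl⟩
      exact hB'.ncard_eq_ncard_of_isBase hB
    · rintro rfl
      exact ⟨B, hB, rfl⟩
  rw [rk, hbases, csSup_singleton]

theorem dual_indep_singleton_of_not_coloop (hx : x ∈ M.E) (hxc : ¬ M.Coloop x) : M✶.Indep {x} := by
  obtain ⟨B, hB, hxB⟩ : ∃ B, M.IsBase B ∧ x ∉ B := by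
    simpa [Coloop, hx] using hxc
  exact (dual_indep_iff_exists (by simpa using hx)).2 ⟨B, hB, by simpa using hxB⟩

theorem circuit_pair_of_dep (hdep : M.Dep {e, f}) (he : M.Indep {e}) (hf : M.Indep {f}) :
    M.Circuit {e, f} := by
  refine ⟨hdep, fun D hD => ?_⟩
  have hmissing : e ∉ D ∨ f ∉ D := by
    by_contra! h
    exact hD.not_superset (Set.insert_subset h.1 (Set.singleton_subset_iff.2 h.2))
  rcases hmissing with heD | hfD
  · exact hf.subset fun y hy => (hD.subset hy).resolve_left (by rintro rfl; exact heD hy)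
  · exact he.subset fun y hy => (hD.subset hy).resolve_right (by rintro rfl; exact hfD hy)

theorem dual_circuit_pair_of_forall_isBase (he : e ∈ M.E) (hf : f ∈ M.E)
    (hec : ¬ M.Coloop e) (hfc : ¬ M.Coloop f) (hB : ∀ B, M.IsBase B → e ∈ B ∨ f ∈ B) :
    M✶.Circuit {e, f} := by
  refine circuit_pair_of_dep (dual_dep_iff_forall.2 ⟨fun B hB' => ?_, Set.pair_subset he hf⟩)
    (dual_indep_singleton_of_not_coloop he hec) (dual_indep_singleton_of_not_coloop hf hfc)
  rcases hB B hB' with h | h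
  · exact ⟨e, Or.inl rfl, h⟩
  · exact ⟨f, Or.inr rfl, h⟩

section RankFinite

variable [M.RankFinite]

theorem KLoose.rk_le_ncard_add (hx : M.KLoose k x) (hI : M.Indep I) (hxcl : x ∈ M.closure I)
    (hxI : x ∉ I) : M.rk ≤ I.ncard + k := by
  have hC := circuit_iff_isCircuit.2 (hI.fundCircuit_isCircuit hxcl hxI)
  have hlt := hx.2 _ hC (M.mem_fundCircuit x I)
  have hCcard : (M.fundCircuit x I).ncard ≤ I.ncard + 1 :=
    (Set.ncard_le_ncard (M.fundCircuit_subset_insert x I) (hI.finite.insert x)).trans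
      (Set.ncard_insert_le x I)
  omega

theorem KLoose.ncard_le_of_mem_closure_diff (hx : M.KLoose k x) (hB : M.IsBase B) (hxB : x ∉ B)
    (hZB : Z ⊆ B) (hxcl : x ∈ M.closure (B \ Z)) : Z.ncard ≤ k := by
  have hrk := hx.rk_le_ncard_add (hB.indep.subset Set.sdiff_subset) hxcl fun h => hxB h.1
  rw [hB.rk_eq_ncard, Set.ncard_sdiff hZB (hB.finite.subset hZB)] at hrk
  have := Set.ncard_le_ncard hZB hB.finite
  omega

theorem KLoose.ncard_le_of_mem_closure_insert_diff (he : M.KLoose k e) (hf : M.KLoose k f)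
    (hef : e ≠ f) (hB : M.IsBase B) (heB : e ∉ B) (hfB : f ∉ B) (hZB : Z ⊆ B)
    (hfcl : f ∈ M.closure (insert e (B \ Z))) : Z.ncard ≤ k + 1 := by
  by_cases hecl : e ∈ M.closure (B \ Z)
  · rw [closure_insert_eq_of_mem_closure hecl] at hfcl
    exact (hf.ncard_le_of_mem_closure_diff hB hfB hZB hfcl).trans k.le_succ
  have hI : M.Indep (insert e (B \ Z)) :=
    ((hB.indep.subset Set.sdiff_subset).insert_indep_iff_of_notMem fun h => heB h.1).2
      ⟨he.1, hecl⟩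
  have hrk := hf.rk_le_ncard_add hI hfcl (by rintro (h | h); exacts [hef.symm h, hfB h.1])
  rw [hB.rk_eq_ncard] at hrk
  have := Set.ncard_insert_le e (B \ Z)
  rw [Set.ncard_sdiff hZB (hB.finite.subset hZB)] at this
  have := Set.ncard_le_ncard hZB hB.finite
  omega

end RankFinite

section Representation

def IsRep (M : Matroid α) (F : Type*) {V : Type*} [DivisionRing F] [AddCommGroup V] [Module F V]
    (φ : α → V) : Prop :=
  ∀ I ⊆ M.E, M.Indep I ↔ LinearIndepOn F φ I

variable {F V : Type*} [DivisionRing F] [AddCommGroup V] [Module F V] {φ : α → V} {X : Set α}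

theorem IsRep.mem_closure_iff_mem_span (hφ : M.IsRep F φ) (hI : M.Indep I) (hx : x ∈ M.E) :
    x ∈ M.closure I ↔ φ x ∈ Submodule.span F (φ '' I) := by
  by_cases hxI : x ∈ I
  · exact iff_of_true (M.mem_closure_of_mem hxI) (Submodule.subset_span ⟨x, hxI, rfl⟩)
  rw [← not_iff_not, hI.notMem_closure_iff_of_notMem hxI hx,
    hφ _ (Set.insert_subset hx hI.subset_ground), linearIndepOn_insert hxI,
    and_iff_right ((hφ I hI.subset_ground).1 hI)]

theorem IsRep.mem_closure_of_mem_span (hφ : M.IsRep F φ) (hX : X ⊆ M.E) (hx : x ∈ M.E)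
    (hspan : φ x ∈ Submodule.span F (φ '' X)) : x ∈ M.closure X := by
  obtain ⟨J, hJ⟩ := M.exists_isBasis X
  have hXJ : φ '' X ⊆ Submodule.span F (φ '' J) := by
    rintro _ ⟨y, hy, rfl⟩
    exact (hφ.mem_closure_iff_mem_span hJ.indep (hX hy)).1 (hJ.subset_closure hy)
  rw [← hJ.closure_eq_closure, hφ.mem_closure_iff_mem_span hJ.indep hx]
  exact Submodule.span_le.2 hXJ hspan

theorem IsRep.exists_linearCombination_eq (hφ : M.IsRep F φ) (hB : M.IsBase B) (hx : x ∈ M.E) :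
    ∃ c : α →₀ F, ↑c.support ⊆ B ∧ Finsupp.linearCombination F φ c = φ x := by
  have hspan := (hφ.mem_closure_iff_mem_span hB.indep hx).1 (hB.closure_eq ▸ hx)
  exact (Finsupp.mem_span_image_iff_linearCombination F).1 hspan

theorem linearCombination_mem_span_image_sdiff {g : α →₀ F} (hg : ↑g.support ⊆ B)
    (hZ : ∀ b ∈ Z, g b = 0) :
    Finsupp.linearCombination F φ g ∈ Submodule.span F (φ '' (B \ Z)) :=
  (Finsupp.mem_span_image_iff_linearCombination F).2
    ⟨g, fun b hb => ⟨hg hb, fun hbZ => Finsupp.mem_support_iff.1 hb (hZ b hbZ)⟩, rfl⟩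

open Finset in
theorem IsRep.rk_le_of_isBase_of_notMem [Fintype F] [M.RankFinite] (hφ : M.IsRep F φ)
    (he : M.KLoose k e) (hf : M.KLoose k f) (hef : e ≠ f) (hB : M.IsBase B) (heB : e ∉ B)
    (hfB : f ∉ B) : M.rk ≤ 2 * k + (Fintype.card F - 1) * (k + 1) := by
  classical
  obtain ⟨B, rfl⟩ := hB.finite.exists_finset_coe
  have hBE : (B : Set α) ⊆ M.E := hB.subset_ground
  obtain ⟨c, hcB, hce⟩ := hφ.exists_linearCombination_eq hB he.1
  obtain ⟨d, hdB, hdf⟩ := hφ.exists_linearCombination_eq hB hf.1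
  have hzeros {x : α} {g : α →₀ F} (hx : M.KLoose k x) (hxB : x ∉ (B : Set α))
      (hg : ↑g.support ⊆ (B : Set α)) (hgx : Finsupp.linearCombination F φ g = φ x) :
      #{b ∈ B | g b = 0} ≤ k := by
    have hspan := hgx ▸ linearCombination_mem_span_image_sdiff (Z := ↑{b ∈ B | g b = 0}) hg
      (by simp)
    simpa only [Set.ncard_coe_finset] using hx.ncard_le_of_mem_closure_diff hB hxB
      (coe_subset.2 (filter_subset _ _))
      (hφ.mem_closure_of_mem_span (Set.sdiff_subset.trans hBE) hx.1 hspan)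
  have hcd (t : F) : #{b ∈ B | d b = t * c b} ≤ k + 1 := by
    set Z : Finset α := {b ∈ B | d b = t * c b}
    have hsupp : ↑(d - t • c).support ⊆ (B : Set α) := fun b hb => by
      rcases Finset.mem_union.1 (Finsupp.support_sub hb) with h | h
      exacts [hdB h, hcB (Finsupp.support_smul h)]
    have hdiff : φ f - t • φ e ∈ Submodule.span F (φ '' (↑B \ ↑Z)) := by
      rw [← hce, ← hdf, ← map_smul, ← map_sub]
      exact linearCombination_mem_span_image_sdiff hsupp (by simp [Z, sub_eq_zero])
    have hspan : φ f ∈ Submodule.span F (φ '' insert e (↑B \ ↑Z)) := by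
      rw [Set.image_insert_eq, Submodule.span_insert]
      have h := Submodule.add_mem_sup
        (Submodule.smul_mem _ t (Submodule.mem_span_singleton_self (φ e))) hdiff
      rwa [add_sub_cancel] at h
    have hfcl := hφ.mem_closure_of_mem_span (Set.insert_subset he.1 (Set.sdiff_subset.trans hBE))
      hf.1 hspan
    simpa only [Set.ncard_coe_finset] using
      he.ncard_le_of_mem_closure_insert_diff hf hef hB heB hfB
        (coe_subset.2 (filter_subset _ _)) hfcl
  rw [hB.rk_eq_ncard, Set.ncard_coe_finset]
  exact card_le_of_forall_card_filter_eq_mul_le B c d k (hzeros he heB hcB hce)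
    (hzeros hf hfB hdB hdf) fun t _ => hcd t

end Representation

end Matroid

theorem rank_bound_two_loose_general {α : Type*} (q k : ℕ)
    (F : Type) [Field F] [Fintype F] (hF : Fintype.card F = q)
    (M : Matroid α) [M.Finite]
    (hrep : M.RepresentableOver F) (hcoloop : ∀ x, ¬ M.Coloop x)
    (e f : α) (hef : e ≠ f) (he : M.KLoose k e) (hf : M.KLoose k f) :
    (M.rk : ℤ) ≤ (q + 1) * (k - 1) + 2 * q ∨ M✶.Circuit {e, f} := by
  by_cases hbase : ∃ B, M.IsBase B ∧ e ∉ B ∧ f ∉ B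
  · obtain ⟨B, hB, heB, hfB⟩ := hbase
    obtain ⟨n, φ, hφ⟩ := hrep
    have hrk := Matroid.IsRep.rk_le_of_isBase_of_notMem hφ he hf hef hB heB hfB
    have hq : 1 ≤ q := hF ▸ Fintype.card_pos
    rw [hF] at hrk
    zify [hq] at hrk
    left
    linarith
  · refine .inr (Matroid.dual_circuit_pair_of_forall_isBase he.1 hf.1 (hcoloop e) (hcoloop f)
      fun B hB => ?_)
    by_contra! hB'
    exact hbase ⟨B, hB, hB'⟩

/-- A simple `GF(q)`-representable matroid with no coloops having two distinct
`k`-loose elements `e` and `f` satisfies `r(M) ≤ (q+1)(k-1) + 2q`, or `{e, f}` is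
a cocircuit of `M`. -/
theorem rank_bound_two_loose {α : Type*} (q k : ℕ) (hq : IsPrimePow q)
    (F : Type) [Field F] [Fintype F] (hF : Fintype.card F = q)
    (M : Matroid α) [M.Finite] (hsimple : M.Simple)
    (hrep : M.RepresentableOver F) (hcoloop : ∀ x, ¬ M.Coloop x)
    (e f : α) (hef : e ≠ f) (he : M.KLoose k e) (hf : M.KLoose k f) :
    (M.rk : ℤ) ≤ (q + 1) * (k - 1) + 2 * q ∨ M✶.Circuit {e, f} :=
  rank_bound_two_loose_general q k F hF M hrep hcoloop e f hef he hf
end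

section
/- For all integers r ≥ 2 and 0 ≤ k ≤ r - 2, there exists a simple binary matroid M of rank r that has a k-loose element and satisfies |E(M)| = 2^k · (r - k + 1). -/
/-!
Put `m = r - k` and work in `𝔽₂^m ⊕ 𝔽₂^k`. Take the apex `(1, …, 1 | 0)` together with every
nonzero vector whose first block has weight at most one; there are `(m + 1) 2^k - 1` of the
latter. These vectors contain the standard basis, so the rank is `m + k = r`, and distinct nonzero
binary vectors are never parallel, so the matroid is simple. A circuit through the apex exhibits it
as a sum of the other members of the circuit; each of them is nonzero in at most one coordinate of
the first block while the apex is nonzero in all `m` of them, so the circuit has more than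
`m = r - k` elements.
-/

open Set Submodule Function Module

theorem LinearIndepOn.finrank_span_image_eq_ncard {ι K V : Type*} [DivisionRing K]
    [AddCommGroup V] [Module K V] {φ : ι → V} {s : Set ι} (h : LinearIndepOn K φ s)
    (hs : s.Finite) : finrank K (span K (φ '' s)) = s.ncard := by
  have := hs.fintype
  rw [image_eq_range, finrank_span_eq_card h.linearIndependent, ← Nat.card_eq_fintype_card,
    Nat.card_coe_set_eq]

theorem LinearIndepOn.exists_insert_of_ncard_lt {ι K V : Type*} [DivisionRing K]
    [AddCommGroup V] [Module K V] {φ : ι → V} {I J : Set ι} (hI : LinearIndepOn K φ I)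
    (hIfin : I.Finite) (hJ : LinearIndepOn K φ J) (hJfin : J.Finite) (hcard : I.ncard < J.ncard) :
    ∃ e ∈ J, e ∉ I ∧ LinearIndepOn K φ (insert e I) := by
  by_contra! h
  have hle : span K (φ '' J) ≤ span K (φ '' I) := by
    refine span_le.mpr (image_subset_iff.mpr fun e he => ?_)
    by_cases heI : e ∈ I
    · exact subset_span (mem_image_of_mem φ heI)
    · by_contra hspan
      exact h e he heI ((linearIndepOn_insert heI).mpr ⟨hI, hspan⟩)
  have := Module.Finite.span_of_finite K (hIfin.image φ)
  have := Submodule.finrank_mono hle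
  rw [hI.finrank_span_image_eq_ncard hIfin, hJ.finrank_span_image_eq_ncard hJfin] at this
  omega

theorem exists_apply_ne_zero_of_mem_span {ι K : Type*} [Semiring K] {S : Set (ι → K)}
    {v : ι → K} (hv : v ∈ span K S) {t : ι} (hvt : v t ≠ 0) : ∃ s ∈ S, s t ≠ 0 := by
  by_contra! h
  have : span K S ≤ LinearMap.ker (LinearMap.proj (R := K) (φ := fun _ : ι => K) t) :=
    span_le.mpr h
  exact hvt (this hv)

theorem ncard_le_ncard_of_mem_span {ι K : Type*} [Semiring K] {S : Set (ι → K)}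
    (hS : S.Finite) {T : Set ι} {v : ι → K} (hv : v ∈ span K S) (hvT : ∀ t ∈ T, v t ≠ 0)
    (hsparse : ∀ s ∈ S, (T ∩ support s).Subsingleton) : T.ncard ≤ S.ncard := by
  choose! f hfS hft using fun t (ht : t ∈ T) => exists_apply_ne_zero_of_mem_span hv (hvT t ht)
  exact ncard_le_ncard_of_injOn f hfS
    (fun t ht t' ht' hff => hsparse _ (hfS t ht) ⟨ht, hft t ht⟩ ⟨ht', hff ▸ hft t' ht'⟩)
    hS

namespace Matroid

variable {α : Type*}

theorem rk_eq_ncard_of_isBase {M : Matroid α} {B : Set α} (hB : M.IsBase B) : M.rk = B.ncard := by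
  have : {n | ∃ B', M.IsBase B' ∧ B'.ncard = n} = {B.ncard} := by
    ext n
    exact ⟨fun ⟨B', hB', hn⟩ => hn ▸ hB'.ncard_eq_ncard_of_isBase hB,
      fun hn => ⟨B, hB, hn.symm⟩⟩
  rw [rk, this, csSup_singleton]

section ofFun

variable {K V : Type*} [DivisionRing K] [AddCommGroup V] [Module K V]

variable (K) in
def ofFun {E : Set α} (φ : α → V) (hE : E.Finite) : Matroid α :=
  (IndepMatroid.ofFinite hE (fun I => I ⊆ E ∧ LinearIndepOn K φ I)
    ⟨empty_subset E, linearIndepOn_empty K φ⟩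
    (fun _ _ hJ hIJ => ⟨hIJ.trans hJ.1, hJ.2.mono hIJ⟩)
    (fun _ _ hI hJ hcard => by
      obtain ⟨e, heJ, heI, hindep⟩ :=
        hI.2.exists_insert_of_ncard_lt (hE.subset hI.1) hJ.2 (hE.subset hJ.1) hcard
      exact ⟨e, heJ, heI, insert_subset (hJ.1 heJ) hI.1, hindep⟩)
    (fun _ hI => hI.1)).matroid

variable {φ : α → V} {E : Set α} {hE : E.Finite}

@[simp] theorem ofFun_ground : (ofFun K φ hE).E = E := rfl

@[simp] theorem ofFun_indep_iff {I : Set α} :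
    (ofFun K φ hE).Indep I ↔ I ⊆ E ∧ LinearIndepOn K φ I := Iff.rfl

instance : (ofFun K φ hE).Finite := ⟨hE⟩

theorem ofFun_indep_insert_iff {I : Set α} {e : α} (hI : (ofFun K φ hE).Indep I) (he : e ∈ E)
    (heI : e ∉ I) : (ofFun K φ hE).Indep (insert e I) ↔ φ e ∉ span K (φ '' I) := by
  rw [ofFun_indep_iff, linearIndepOn_insert heI]
  exact ⟨fun h => h.2.2, fun h => ⟨insert_subset he hI.1, hI.2, h⟩⟩

theorem ofFun_rk : (ofFun K φ hE).rk = finrank K (span K (φ '' E)) := by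
  obtain ⟨B, hB⟩ := (ofFun K φ hE).exists_isBase
  have hBE : B ⊆ E := hB.subset_ground
  have hspan : span K (φ '' E) = span K (φ '' B) := by
    refine le_antisymm (span_le.mpr (image_subset_iff.mpr fun e he => ?_))
      (span_mono (image_mono hBE))
    by_cases heB : e ∈ B
    · exact subset_span (mem_image_of_mem φ heB)
    · by_contra hns
      exact (hB.insert_dep ⟨he, heB⟩).not_indep
        ((ofFun_indep_insert_iff hB.indep he heB).mpr hns)
  rw [rk_eq_ncard_of_isBase hB, hspan,
    (hB.indep.2 : LinearIndepOn K φ B).finrank_span_image_eq_ncard (hE.subset hBE)]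

theorem mem_span_of_ofFun_circuit {C : Set α} {e : α} (hC : (ofFun K φ hE).Circuit C)
    (heC : e ∈ C) : φ e ∈ span K (φ '' (C \ {e})) := by
  by_contra hns
  have hI : (ofFun K φ hE).Indep (C \ {e}) := hC.2 _ (sdiff_singleton_ssubset.mpr heC)
  have := (ofFun_indep_insert_iff hI (hC.1.subset_ground heC) (by simp)).mpr hns
  rw [insert_sdiff_singleton, insert_eq_of_mem heC] at this
  exact hC.1.not_indep this

end ofFun

theorem ncard_lt_ncard_of_ofFun_circuit {K ι : Type*} [DivisionRing K] {φ : α → ι → K}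
    {E : Set α} {hE : E.Finite} {T : Set ι} {C : Set α} {e : α} (hC : (ofFun K φ hE).Circuit C)
    (heC : e ∈ C) (heT : ∀ t ∈ T, φ e t ≠ 0)
    (hsparse : ∀ f ∈ E, f ≠ e → (T ∩ support (φ f)).Subsingleton) :
    T.ncard < C.ncard := by
  have hCE : C ⊆ E := hC.1.subset_ground
  have hCfin : C.Finite := hE.subset hCE
  have hT : T.ncard ≤ (φ '' (C \ {e})).ncard :=
    ncard_le_ncard_of_mem_span (hCfin.sdiff.image φ) (mem_span_of_ofFun_circuit hC heC) heT
      (by rintro _ ⟨f, ⟨hfC, hfe⟩, rfl⟩; exact hsparse f (hCE hfC) hfe)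
  have := ncard_image_le (f := φ) (hCfin.sdiff (t := {e}))
  rw [ncard_sdiff_singleton_of_mem heC] at this
  have := (ncard_pos hCfin).mpr ⟨e, heC⟩
  omega

theorem ofFun_zmod_two_simple {V : Type*} [AddCommGroup V] [Module (ZMod 2) V] {φ : α → V}
    {E : Set α} {hE : E.Finite} (hinj : InjOn φ E) (hne : ∀ e ∈ E, φ e ≠ 0) :
    (ofFun (ZMod 2) φ hE).Simple := by
  intro e he f hf
  refine ofFun_indep_iff.mpr ⟨insert_subset he (singleton_subset_iff.mpr hf), ?_⟩
  by_cases hef : e = f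
  · rw [hef, pair_eq_singleton]
    exact (linearIndepOn_singleton_iff _).mpr (hne f hf)
  · refine (linearIndepOn_pair_iff φ hef (hne e he)).mpr fun c => ?_
    rcases (by decide : ∀ c : ZMod 2, c = 0 ∨ c = 1) c with rfl | rfl
    · exact fun h => hne f hf (by rw [← h, zero_smul])
    · exact fun h => hef (hinj he hf (by rw [← h, one_smul]))

theorem ofFun_representableOver {F V : Type} [Field F] [AddCommGroup V] [Module F V]
    [FiniteDimensional F V] {φ : α → V} {E : Set α} {hE : E.Finite} :
    (ofFun F φ hE).RepresentableOver F := by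
  let b := Module.finBasis F V
  refine ⟨finrank F V, b.equivFun ∘ φ, fun I hI => ?_⟩
  rw [ofFun_indep_iff, and_iff_right (show I ⊆ E from hI)]
  exact (b.equivFun.toLinearMap.linearIndependent_iff b.equivFun.ker).symm

end Matroid

section SharpExample

open Set Submodule Function Module Matroid

variable {m k : ℕ}

def lowVector (p : Option (Fin m) × (Fin k → ZMod 2)) : Fin m ⊕ Fin k → ZMod 2 :=
  Sum.elim (p.1.elim 0 (Pi.single · 1)) p.2

variable (m k) in
def apex : Fin m ⊕ Fin k → ZMod 2 := Sum.elim 1 0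

variable (m k) in
def sharpVectors : Set (Fin m ⊕ Fin k → ZMod 2) := insert (apex m k) (range lowVector \ {0})

theorem lowVector_injective : Injective (lowVector (m := m) (k := k)) := by
  rintro ⟨o, w⟩ ⟨o', w'⟩ h
  obtain ⟨ho, rfl⟩ := Sum.elim_eq_iff.mp h
  have key (o : Option (Fin m)) (a : Fin m) :
      o.elim 0 (Pi.single · (1 : ZMod 2)) a = 1 ↔ o = some a := by
    cases o <;> simp [Pi.single_apply, eq_comm]
  have ho : o.elim 0 (Pi.single · (1 : ZMod 2)) = o'.elim 0 (Pi.single · 1) := ho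
  obtain rfl : o = o' := Option.ext fun a => by rw [← key o a, ← key o' a, ho]
  rfl

theorem lowVector_sparse (p : Option (Fin m) × (Fin k → ZMod 2)) :
    (range Sum.inl ∩ support (lowVector p)).Subsingleton := by
  rintro _ ⟨⟨i, rfl⟩, hi⟩ _ ⟨⟨j, rfl⟩, hj⟩
  obtain ⟨_ | a, w⟩ := p <;> simp_all [lowVector, Pi.single_apply]

theorem apex_notMem_range_lowVector (hm : 2 ≤ m) : apex m k ∉ range lowVector := by
  rintro ⟨p, hp⟩
  have := lowVector_sparse p (x := .inl ⟨0, by omega⟩) (y := .inl ⟨1, by omega⟩)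
  simp [hp, apex] at this

theorem zero_notMem_sharpVectors (hm : 1 ≤ m) : 0 ∉ sharpVectors m k := by
  rintro (h | ⟨-, h⟩)
  · simpa [apex] using congrFun h (.inl ⟨0, hm⟩)
  · exact h rfl

theorem ncard_sharpVectors (hm : 2 ≤ m) : (sharpVectors m k).ncard = 2 ^ k * (m + 1) := by
  have hzero : (0 : Fin m ⊕ Fin k → ZMod 2) = lowVector (none, 0) := by
    simp [lowVector]
  rw [sharpVectors, ncard_insert_of_notMem (fun h => apex_notMem_range_lowVector hm h.1),
    ncard_sdiff_singleton_of_mem (hzero ▸ mem_range_self _),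
    ncard_range_of_injective lowVector_injective, Nat.card_eq_fintype_card]
  simp only [Fintype.card_prod, Fintype.card_option, Fintype.card_fin, Fintype.card_fun,
    ZMod.card]
  rw [Nat.sub_add_cancel (Nat.one_le_iff_ne_zero.mpr (by positivity)), mul_comm]

theorem single_mem_sharpVectors (j : Fin m ⊕ Fin k) : Pi.single j 1 ∈ sharpVectors m k := by
  refine mem_insert_of_mem _ ⟨?_, by simp⟩
  cases j with
  | inl i => exact ⟨(some i, 0), by simp [lowVector]⟩
  | inr j => exact ⟨(none, Pi.single j 1), by simp [lowVector]⟩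

theorem span_sharpVectors : span (ZMod 2) (sharpVectors m k) = ⊤ := by
  rw [eq_top_iff, ← (Pi.basisFun (ZMod 2) (Fin m ⊕ Fin k)).span_eq, span_le]
  rintro _ ⟨j, rfl⟩
  rw [Pi.basisFun_apply]
  exact subset_span (single_mem_sharpVectors j)

theorem sharpVectors_sparse {v : Fin m ⊕ Fin k → ZMod 2} (hv : v ∈ sharpVectors m k)
    (hne : v ≠ apex m k) : (range Sum.inl ∩ support v).Subsingleton := by
  obtain rfl | ⟨⟨p, rfl⟩, -⟩ := hv
  · exact absurd rfl hne
  · exact lowVector_sparse p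

theorem exists_binary_matroid_with_loose_element (hm : 2 ≤ m) :
    ∃ M : Matroid ℕ, M.Finite ∧ M.Simple ∧ M.RepresentableOver (ZMod 2) ∧
      M.rk = m + k ∧ (∃ e, M.KLoose k e) ∧ M.E.ncard = 2 ^ k * (m + 1) := by
  obtain ⟨code, hcode⟩ := Countable.exists_injective_nat (Fin m ⊕ Fin k → ZMod 2)
  have hφ : LeftInverse (invFun code) code := leftInverse_invFun hcode
  have hE : (code '' sharpVectors m k).Finite := (toFinite _).image code
  set M := ofFun (ZMod 2) (invFun code) hE
  have hrk : M.rk = m + k := by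
    rw [ofFun_rk, hφ.image_image, span_sharpVectors, finrank_top,
      Module.finrank_fintype_fun_eq_card, Fintype.card_sum, Fintype.card_fin, Fintype.card_fin]
  have hloose : M.KLoose k (code (apex m k)) := by
    refine ⟨mem_image_of_mem _ (mem_insert _ _), fun C hC heC => ?_⟩
    have := ncard_lt_ncard_of_ofFun_circuit (T := range Sum.inl) hC heC
      (by rintro _ ⟨i, rfl⟩; simp [hφ _, apex])
      (by
        rintro _ ⟨v, hv, rfl⟩ hne
        rw [hφ]
        exact sharpVectors_sparse hv (hne ∘ congrArg code))
    rw [ncard_range_of_injective Sum.inl_injective, Nat.card_eq_fintype_card,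
      Fintype.card_fin] at this
    omega
  refine ⟨M, inferInstance, ofFun_zmod_two_simple ?_ ?_, ofFun_representableOver, hrk,
    ⟨_, hloose⟩, ?_⟩
  · rintro _ ⟨v, -, rfl⟩ _ ⟨w, -, rfl⟩ h
    rw [hφ, hφ] at h
    rw [h]
  · rintro _ ⟨v, hv, rfl⟩
    rw [hφ]
    exact ne_of_mem_of_not_mem hv (zero_notMem_sharpVectors (by omega))
  · rw [ofFun_ground, ncard_image_of_injective _ hcode, ncard_sharpVectors hm]

end SharpExample

/-- For all `r ≥ 2` and `0 ≤ k ≤ r - 2`, there exists a simple binary matroid of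
rank `r` with a `k`-loose element whose size is exactly `2^k (r - k + 1)`. -/
theorem sharp_example (r k : ℕ) (hr : 2 ≤ r) (hk : k ≤ r - 2) :
    ∃ M : Matroid ℕ, M.Finite ∧ M.Simple ∧ M.RepresentableOver (ZMod 2) ∧
      M.rk = r ∧ (∃ e, M.KLoose k e) ∧ M.E.ncard = 2 ^ k * (r - k + 1) := by
  obtain ⟨M, hfin, hsimple, hrep, hrk, hloose, hcard⟩ :=
    exists_binary_matroid_with_loose_element (m := r - k) (k := k) (by omega)
  exact ⟨M, hfin, hsimple, hrep, by omega, hloose, hcard⟩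
end
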